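/- Let m, q be positive integers with 1 ≤ q < m (or m = q = 1), and let λ₁, λ₂ be rationals with λ₁, λ₂ ≥ 5/6. Suppose -1 + (1+q)/m - λ₁/m - qλ₂/m ≥ -5/6. Then λ₁ + λ₂ ≤ 11/6. Moreover, if m ≥ 2 then necessarily q = m - 1 and λ₁ = λ₂ = 5/6. -/
import Mathlib


theorem stmt_4 (m q : ℕ) (hq : 1 ≤ q) (hqm : q < m ∨ (m = 1 ∧ q = 1))
    (l1 l2 : ℚ) (hl1 : 5 / 6 ≤ l1) (hl2 : 5 / 6 ≤ l2)
    (hdiscr : -1 + (1 + (q : ℚ)) / m - l1 / m - (q : ℚ) * l2 / m ≥ -(5 / 6)) :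
    l1 + l2 ≤ 11 / 6 ∧ (2 ≤ m → q = m - 1 ∧ l1 = 5 / 6 ∧ l2 = 5 / 6) := by
  rcases hqm with hlt | ⟨hm1, hq1⟩
  · have hm2 : 2 ≤ m := by omega
    have hmQ : (0:ℚ) < m := by exact_mod_cast Nat.pos_of_ne_zero (by omega)
    have hmne : (m:ℚ) ≠ 0 := ne_of_gt hmQ
    have h1 : (m:ℚ)/6 ≤ 1 + q - l1 - q*l2 := by
      have h := mul_le_mul_of_nonneg_right hdiscr (le_of_lt hmQ)
      field_simp at h
      linarith
    have hq1 : (1:ℚ) ≤ q := by exact_mod_cast hq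
    have h2 : (0:ℚ) ≤ (q:ℚ)*(l2 - 5/6) := mul_nonneg (by linarith) (by linarith)
    have hmq : (q:ℚ) + 1 ≤ m := by exact_mod_cast hlt
    -- from these, equality forced
    have hl1e : l1 = 5/6 := by nlinarith
    have hl2e : l2 = 5/6 := by nlinarith
    have hmqe : m = q + 1 := by
      have : (m:ℚ) ≤ q + 1 := by nlinarith
      have : m ≤ q + 1 := by exact_mod_cast this
      omega
    refine ⟨by rw [hl1e, hl2e]; norm_num, fun _ => ⟨by omega, hl1e, hl2e⟩⟩
  · subst hm1 hq1
    push_cast at hdiscr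
    constructor
    · linarith
    · intro h; omega
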